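/- arXiv:1609.09602 — 4 statements merged into one kernel-verified Lean document; each statement's English description precedes it below -/
import Mathlib

section
/- Let C ⊆ {0,1}ⁿ be a neural code and U = {U_1,…,U_n} a collection of open subsets of a topological space X such that C = C(U). Then CF(J_C) is exactly the union of the following three sets: (Type 1) {x_σ : σ ⊆ {1,…,n}, U_σ = ∅, and U_γ ≠ ∅ for every γ ⊊ σ}; (Type 2) {x_σ·∏_{i∈τ}(1 − x_i) : σ, τ nonempty and disjoint, U_σ ≠ ∅, ⋃_{i∈τ} U_i ≠ X, U_σ ⊆ ⋃_{i∈τ} U_i, U_γ ⊄ ⋃_{i∈τ} U_i for every γ ⊊ σ, and U_σ ⊄ ⋃_{i∈γ} U_i for every γ ⊊ τ}; (Type 3) {∏_{i∈τ}(1 − x_i) : X ⊆ ⋃_{i∈τ} U_i and X ⊄ ⋃_{i∈γ} U_i for every γ ⊊ τ}. In particular, J_C is the ideal generated by these three sets. -/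
open MvPolynomial

/-- The characteristic polynomial `ρ_v = ∏ i, (1 - v_i - x_i)` of a word `v ∈ {0,1}ⁿ = 𝔽₂ⁿ`. -/
noncomputable def rho (n : ℕ) (v : Fin n → ZMod 2) : MvPolynomial (Fin n) (ZMod 2) :=
  ∏ i, (1 - C (v i) - X i)

/-- The neural ideal `J_C = ⟨ρ_v : v ∉ C⟩` of a neural code `C ⊆ {0,1}ⁿ`. -/
noncomputable def neuralIdeal (n : ℕ) (Co : Set (Fin n → ZMod 2)) :
    Ideal (MvPolynomial (Fin n) (ZMod 2)) :=
  Ideal.span { p | ∃ v, v ∉ Co ∧ p = rho n v }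

/-- A pseudo-monomial: `∏_{i∈σ} x_i ∏_{j∈τ} (1 - x_j)` with `σ, τ` disjoint. -/
def IsPseudoMonomial (n : ℕ) (f : MvPolynomial (Fin n) (ZMod 2)) : Prop :=
  ∃ σ τ : Finset (Fin n), Disjoint σ τ ∧
    f = (∏ i ∈ σ, X i) * ∏ j ∈ τ, (1 - X j)

/-- `f` is a minimal pseudo-monomial of the ideal `J`. -/
def IsMinimalPM (n : ℕ) (J : Ideal (MvPolynomial (Fin n) (ZMod 2)))
    (f : MvPolynomial (Fin n) (ZMod 2)) : Prop :=
  f ∈ J ∧ IsPseudoMonomial n f ∧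
    ¬ ∃ g, IsPseudoMonomial n g ∧ g ∈ J ∧ g.totalDegree < f.totalDegree ∧
      ∃ h, f = g * h

/-- The canonical form `CF(J)`: the set of all minimal pseudo-monomials of `J`. -/
def CF (n : ℕ) (J : Ideal (MvPolynomial (Fin n) (ZMod 2))) :
    Set (MvPolynomial (Fin n) (ZMod 2)) :=
  { f | IsMinimalPM n J f }

/-- An ideal is a pseudo-monomial ideal if it is generated by finitely many pseudo-monomials. -/
def IsPseudoMonomialIdeal (n : ℕ) (J : Ideal (MvPolynomial (Fin n) (ZMod 2))) : Prop :=
  ∃ S : Finset (MvPolynomial (Fin n) (ZMod 2)),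
    (∀ f ∈ S, IsPseudoMonomial n f) ∧ J = Ideal.span (S : Set (MvPolynomial (Fin n) (ZMod 2)))

/-- A polynomial is square-free if every variable occurs with exponent at most 1
in every monomial of its support. -/
def IsSquareFreePoly (n : ℕ) (f : MvPolynomial (Fin n) (ZMod 2)) : Prop :=
  ∀ m ∈ f.support, ∀ i, m i ≤ 1

/-- The Boolean ideal `B = ⟨x_i (1 - x_i) : 1 ≤ i ≤ n⟩`. -/
noncomputable def boolIdeal (n : ℕ) : Ideal (MvPolynomial (Fin n) (ZMod 2)) :=
  Ideal.span { p | ∃ i : Fin n, p = X i * (1 - X i) }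

/-- The square-free representative `h_R` of `h` modulo the Boolean ideal:
replace every exponent by its truncation at 1. -/
noncomputable def sqReduce (n : ℕ) (h : MvPolynomial (Fin n) (ZMod 2)) :
    MvPolynomial (Fin n) (ZMod 2) :=
  ∑ m ∈ h.support,
    monomial (Finsupp.mapRange (fun e => min e 1) (by simp) m) (coeff m h)

/-- The set of reduced products `P(C,D) = {(f g)_R : f ∈ CF(J_C), g ∈ CF(J_D)}`. -/
def reducedProducts (n : ℕ) (Co D : Set (Fin n → ZMod 2)) :
    Set (MvPolynomial (Fin n) (ZMod 2)) :=
  { p | ∃ f ∈ CF n (neuralIdeal n Co), ∃ g ∈ CF n (neuralIdeal n D), p = sqReduce n (f * g) }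

/-- The set of minimal reduced products `MP(C,D)`. -/
def minReducedProducts (n : ℕ) (Co D : Set (Fin n → ZMod 2)) :
    Set (MvPolynomial (Fin n) (ZMod 2)) :=
  { h | h ∈ reducedProducts n Co D ∧ h ≠ 0 ∧
    ¬ ∃ f ∈ reducedProducts n Co D, ∃ g : MvPolynomial (Fin n) (ZMod 2),
      1 ≤ g.totalDegree ∧ h = f * g }

/-- The code `C(U)` of a cover `U = {U_1, …, U_n}` of a topological space `X`. -/
def codeOfCover {X : Type*} [TopologicalSpace X] (n : ℕ) (U : Fin n → Set X) :
    Set (Fin n → ZMod 2) :=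
  { v | ((⋂ i ∈ { i : Fin n | v i = 1 }, U i) \ ⋃ j ∈ { j : Fin n | v j = 0 }, U j).Nonempty }
section NeuralAux
open Finset

/-- auxiliary pseudo-monomial. -/
noncomputable def pm (n : ℕ) (σ τ : Finset (Fin n)) : MvPolynomial (Fin n) (ZMod 2) :=
  (∏ i ∈ σ, X i) * ∏ j ∈ τ, (1 - X j)

def vOf (n : ℕ) (S : Finset (Fin n)) : Fin n → ZMod 2 := fun i => if i ∈ S then 1 else 0

lemma zmod2_cases (a : ZMod 2) : a = 0 ∨ a = 1 := by revert a; decide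

lemma rho_vOf (n : ℕ) (S : Finset (Fin n)) : rho n (vOf n S) = pm n S Sᶜ := by
  rw [rho, ← Finset.prod_mul_prod_compl S, pm]
  congr 1
  · apply Finset.prod_congr rfl
    intro i hi
    simp only [vOf, if_pos hi, map_one]
    rw [show (1:MvPolynomial (Fin n) (ZMod 2)) - 1 - X i = -X i by ring, CharTwo.neg_eq]
  · apply Finset.prod_congr rfl
    intro i hi
    rw [Finset.mem_compl] at hi
    simp only [vOf, if_neg hi, map_zero, sub_zero]

lemma vOf_eq (n : ℕ) (v : Fin n → ZMod 2) : v = vOf n (univ.filter (fun i => v i = 1)) := by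
  funext i
  rcases zmod2_cases (v i) with h | h <;> simp [vOf, h]

lemma rho_isPM (n : ℕ) (v : Fin n → ZMod 2) :
    ∃ σ τ : Finset (Fin n), Disjoint σ τ ∧ rho n v = pm n σ τ := by
  refine ⟨univ.filter (fun i => v i = 1), (univ.filter (fun i => v i = 1))ᶜ,
    disjoint_compl_right, ?_⟩
  conv_lhs => rw [vOf_eq n v]
  exact rho_vOf n _

lemma eval_rho_ne (n : ℕ) (v w : Fin n → ZMod 2) (h : w ≠ v) : eval w (rho n v) = 0 := by
  obtain ⟨i, hi⟩ : ∃ i, w i ≠ v i := Function.ne_iff.mp h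
  rw [rho, map_prod]
  apply Finset.prod_eq_zero (Finset.mem_univ i)
  have : ∀ a b : ZMod 2, a ≠ b → 1 - b - a = 0 := by decide
  simpa using this _ _ hi

lemma pm_expand (n : ℕ) (σ τ : Finset (Fin n)) (hd : Disjoint σ τ) :
    pm n σ τ = ∑ A ∈ ((σ ∪ τ)ᶜ).powerset, pm n (σ ∪ A) (σ ∪ A)ᶜ := by
  set R := (σ ∪ τ)ᶜ with hR
  have h1 : (1 : MvPolynomial (Fin n) (ZMod 2)) = ∏ k ∈ R, (X k + (1 - X k)) := by
    simp
  have : pm n σ τ = pm n σ τ * ∏ k ∈ R, (X k + (1 - X k)) := by rw [← h1, mul_one]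
  rw [this, Finset.prod_add, Finset.mul_sum]
  apply Finset.sum_congr rfl
  intro A hA
  rw [Finset.mem_powerset] at hA
  have hσA : Disjoint σ A := by
    refine Finset.disjoint_left.mpr fun x hx hxA => ?_
    have := hA hxA
    rw [hR, Finset.mem_compl, Finset.mem_union] at this
    exact this (Or.inl hx)
  have hτRA : Disjoint τ (R \ A) := by
    refine Finset.disjoint_left.mpr fun x hx hxRA => ?_
    have := (Finset.mem_sdiff.mp hxRA).1
    rw [hR, Finset.mem_compl, Finset.mem_union] at this
    exact this (Or.inr hx)
  have hset : (σ ∪ A)ᶜ = τ ∪ (R \ A) := by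
    ext x
    have h1 : x ∈ A → ¬(x ∈ σ ∨ x ∈ τ) := fun h => by
      have := hA h; rw [hR, Finset.mem_compl, Finset.mem_union] at this; exact this
    have h2 : x ∈ σ → x ∉ τ := fun h => Finset.disjoint_left.mp hd h
    have h3 : x ∈ R ↔ ¬(x ∈ σ ∨ x ∈ τ) := by rw [hR, Finset.mem_compl, Finset.mem_union]
    simp only [Finset.mem_compl, Finset.mem_union, Finset.mem_sdiff, h3]
    tauto
  rw [pm, pm, hset, Finset.prod_union hσA, Finset.prod_union hτRA]
  ring

lemma eval_mem_neuralIdeal (n : ℕ) (Co : Set (Fin n → ZMod 2)) (f : MvPolynomial (Fin n) (ZMod 2))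
    (hf : f ∈ neuralIdeal n Co) (v : Fin n → ZMod 2) (hv : v ∈ Co) : eval v f = 0 := by
  have : neuralIdeal n Co ≤ RingHom.ker (eval v) := by
    rw [neuralIdeal, Ideal.span_le]
    rintro p ⟨w, hw, rfl⟩
    have : v ≠ w := fun h => hw (h ▸ hv)
    exact eval_rho_ne n w v this
  exact this hf

lemma pm_mem_iff (n : ℕ) (Co : Set (Fin n → ZMod 2)) (σ τ : Finset (Fin n)) (hd : Disjoint σ τ) :
    pm n σ τ ∈ neuralIdeal n Co ↔
      ∀ v ∈ Co, ¬((∀ i ∈ σ, v i = 1) ∧ (∀ j ∈ τ, v j = 0)) := by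
  constructor
  · intro hmem v hv ⟨h1, h0⟩
    have he := eval_mem_neuralIdeal n Co _ hmem v hv
    rw [pm] at he
    simp only [map_mul, map_prod, map_sub, map_one, eval_X] at he
    rw [Finset.prod_eq_one (fun i hi => h1 i hi),
        Finset.prod_eq_one (fun j hj => by rw [h0 j hj, sub_zero]), mul_one] at he
    exact one_ne_zero he
  · intro h
    rw [pm_expand n σ τ hd]
    apply Ideal.sum_mem
    intro A hA
    rw [Finset.mem_powerset] at hA
    rw [← rho_vOf]
    apply Ideal.subset_span
    refine ⟨vOf n (σ ∪ A), fun hmem => ?_, rfl⟩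
    refine h _ hmem ⟨fun i hi => ?_, fun j hj => ?_⟩
    · simp [vOf, Finset.mem_union, hi]
    · have hjσ : j ∉ σ := Finset.disjoint_right.mp hd hj
      have hjA : j ∉ A := fun hjA => by
        have := hA hjA
        rw [Finset.mem_compl, Finset.mem_union] at this
        exact this (Or.inr hj)
      simp [vOf, Finset.mem_union, hjσ, hjA]

lemma cover_iff {Ω : Type*} [TopologicalSpace Ω] (n : ℕ) (U : Fin n → Set Ω)
    (σ τ : Finset (Fin n)) :
    (∀ v ∈ codeOfCover n U, ¬((∀ i ∈ σ, v i = 1) ∧ (∀ j ∈ τ, v j = 0))) ↔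
      (⋂ i ∈ σ, U i) ⊆ ⋃ j ∈ τ, U j := by
  constructor
  · intro h x hx
    classical
    set w : Fin n → ZMod 2 := fun i => if x ∈ U i then 1 else 0 with hw
    have hwc : w ∈ codeOfCover n U := by
      refine ⟨x, ?_, ?_⟩
      · simp only [Set.mem_iInter]
        intro i hi
        simp only [Set.mem_setOf_eq, hw] at hi
        by_contra hxu
        simp [hxu] at hi
      · simp only [Set.mem_iUnion, not_exists]
        intro j hj
        simp only [Set.mem_setOf_eq, hw] at hj
        intro hxu
        simp [hxu] at hj
    have := h w hwc
    push_neg at this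
    obtain ⟨j, hj, hj0⟩ := this (fun i hi => by
      have : x ∈ U i := Set.mem_iInter₂.mp hx i hi
      simp [hw, this])
    have hxj : x ∈ U j := by
      by_contra hxu
      exact hj0 (by simp [hw, hxu])
    exact Set.mem_biUnion hj hxj
  · rintro h v ⟨x, hx1, hx0⟩ ⟨h1, h0⟩
    have hxσ : x ∈ ⋂ i ∈ σ, U i := by
      refine Set.mem_iInter₂.mpr fun i hi => ?_
      exact Set.mem_iInter₂.mp hx1 i (h1 i hi)
    obtain ⟨j, hj, hxj⟩ := Set.mem_iUnion₂.mp (h hxσ)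
    exact hx0 (Set.mem_biUnion (show v j = 0 from h0 j hj) hxj)

lemma eval_pm (n : ℕ) (w : Fin n → ZMod 2) (σ τ : Finset (Fin n)) :
    eval w (pm n σ τ) = (∏ i ∈ σ, w i) * ∏ j ∈ τ, (1 - w j) := by
  simp [pm]

lemma pm_divisor (n : ℕ) (σ τ σ' τ' : Finset (Fin n)) (hd : Disjoint σ τ)
    (q : MvPolynomial (Fin n) (ZMod 2)) (h : pm n σ τ = pm n σ' τ' * q) :
    σ' ⊆ σ ∧ τ' ⊆ τ := by
  classical
  constructor
  · intro i hi
    by_contra hiσ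
    set w : Fin n → ZMod 2 := fun k => if k ∈ σ then 1 else 0 with hw
    have h1 : eval w (pm n σ τ) = 1 := by
      rw [eval_pm, Finset.prod_eq_one (fun k hk => by simp [hw, hk]),
        Finset.prod_eq_one (fun k hk => by
          simp [hw, Finset.disjoint_right.mp hd hk]), mul_one]
    have h2 : eval w (pm n σ' τ') = 0 := by
      rw [eval_pm]
      rw [Finset.prod_eq_zero hi (by simp [hw, hiσ])]
      rw [zero_mul]
    rw [h, map_mul, h2, zero_mul] at h1
    exact one_ne_zero h1.symm
  · intro j hj
    by_contra hjτ
    set w : Fin n → ZMod 2 := fun k => if k ∈ σ ∨ k = j then 1 else 0 with hw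
    have h1 : eval w (pm n σ τ) = 1 := by
      rw [eval_pm, Finset.prod_eq_one (fun k hk => by simp [hw, hk]),
        Finset.prod_eq_one (fun k hk => by
          have hk1 : k ∉ σ := Finset.disjoint_right.mp hd hk
          have hk2 : k ≠ j := fun h => hjτ (h ▸ hk)
          simp [hw, hk1, hk2]), mul_one]
    have h2 : eval w (pm n σ' τ') = 0 := by
      rw [eval_pm, Finset.prod_eq_zero hj (show (1:ZMod 2) - w j = 0 by simp [hw]), mul_zero]
    rw [h, map_mul, h2, zero_mul] at h1
    exact one_ne_zero h1.symm

noncomputable def ind (n : ℕ) (S : Finset (Fin n)) : Fin n →₀ ℕ :=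
  ∑ i ∈ S, Finsupp.single i 1

lemma prodX_eq (n : ℕ) (S : Finset (Fin n)) :
    (∏ i ∈ S, X i : MvPolynomial (Fin n) (ZMod 2)) = monomial (ind n S) 1 := by
  classical
  induction S using Finset.induction with
  | empty => simp [ind]
  | @insert a s ha ih =>
    rw [Finset.prod_insert ha, ih,
      show ind n (insert a s) = Finsupp.single a 1 + ind n s by
        rw [ind, ind, Finset.sum_insert ha],
      X, monomial_mul, one_mul]

lemma ind_apply (n : ℕ) (S : Finset (Fin n)) (i : Fin n) :
    ind n S i = if i ∈ S then 1 else 0 := by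
  classical
  rw [ind, Finsupp.finset_sum_apply]
  simp [Finsupp.single_apply, Finset.sum_ite_eq' S i (fun _ => 1)]

lemma ind_inj (n : ℕ) (S T : Finset (Fin n)) (h : ind n S = ind n T) : S = T := by
  ext i
  have := congrArg (fun f => f i) h
  simp only [ind_apply] at this
  by_cases hS : i ∈ S <;> by_cases hT : i ∈ T <;> simp_all

lemma ind_sum (n : ℕ) (S : Finset (Fin n)) : (ind n S).sum (fun _ e => e) = S.card := by
  classical
  induction S using Finset.induction with
  | empty => simp [ind]
  | @insert a s ha ih =>
    rw [ind, Finset.sum_insert ha, ← ind]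
    rw [Finsupp.sum_add_index (by simp) (by simp)]
    rw [Finsupp.sum_single_index rfl, ih, Finset.card_insert_of_notMem ha]
    omega

lemma pm_totalDegree (n : ℕ) (σ τ : Finset (Fin n)) (hd : Disjoint σ τ) :
    (pm n σ τ).totalDegree = σ.card + τ.card := by
  classical
  apply le_antisymm
  · apply (totalDegree_mul _ _).trans
    apply add_le_add
    · apply (totalDegree_finset_prod _ _).trans
      apply (Finset.sum_le_card_nsmul σ _ 1 (fun i _ => by
        rw [totalDegree_X])).trans
      simp
    · apply (totalDegree_finset_prod _ _).trans
      apply (Finset.sum_le_card_nsmul τ _ 1 (fun j _ => by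
        apply (totalDegree_sub _ _).trans
        simp [totalDegree_X])).trans
      simp
  · have hchar : ∀ j : Fin n, (1 - X j : MvPolynomial (Fin n) (ZMod 2)) = 1 + X j := by
      intro j; rw [sub_eq_add_neg, CharTwo.neg_eq]
    have hexp : pm n σ τ = ∑ A ∈ τ.powerset, monomial (ind n (σ ∪ (τ \ A))) 1 := by
      rw [pm]
      conv_lhs => rw [Finset.prod_congr rfl (fun j _ => hchar j)]
      rw [Finset.prod_add, Finset.mul_sum]
      apply Finset.sum_congr rfl
      intro A hA
      rw [Finset.mem_powerset] at hA
      rw [Finset.prod_const_one, one_mul, ← Finset.prod_union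
        (Finset.disjoint_left.mpr fun x hx hx2 =>
          Finset.disjoint_left.mp hd hx (Finset.mem_sdiff.mp hx2).1), prodX_eq]
    have hcoeff : coeff (ind n (σ ∪ τ)) (pm n σ τ) = 1 := by
      rw [hexp, coeff_sum]
      rw [Finset.sum_eq_single_of_mem ∅ (Finset.empty_mem_powerset τ)]
      · simp [coeff_monomial]
      · intro A hA hAne
        rw [Finset.mem_powerset] at hA
        rw [coeff_monomial, if_neg]
        intro heq
        have h2 := ind_inj n _ _ heq
        have hdis : Disjoint σ (τ \ A) := hd.mono_right (Finset.sdiff_subset)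
        have h3 : τ \ A = τ := by
          rw [← Finset.union_sdiff_cancel_left hdis, h2, Finset.union_sdiff_cancel_left hd]
        have h4 : A = ∅ := by
          rw [Finset.sdiff_eq_self_iff_disjoint] at h3
          exact Finset.eq_empty_of_forall_notMem fun x hx =>
            Finset.disjoint_right.mp h3 hx (hA hx)
        exact hAne h4
    calc σ.card + τ.card = (σ ∪ τ).card := (Finset.card_union_of_disjoint hd).symm
      _ = (ind n (σ ∪ τ)).sum (fun _ e => e) := (ind_sum n _).symm
      _ ≤ (pm n σ τ).totalDegree := le_totalDegree (by
            rw [mem_support_iff, hcoeff]; exact one_ne_zero)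

lemma pm_factor (n : ℕ) (σ τ σ' τ' : Finset (Fin n)) (hσ : σ' ⊆ σ) (hτ : τ' ⊆ τ) :
    pm n σ τ = pm n σ' τ' * pm n (σ \ σ') (τ \ τ') := by
  rw [pm, pm, pm, ← Finset.prod_sdiff hσ, ← Finset.prod_sdiff hτ]
  ring

lemma pm_isPM (n : ℕ) (σ τ : Finset (Fin n)) (hd : Disjoint σ τ) :
    IsPseudoMonomial n (pm n σ τ) := ⟨σ, τ, hd, rfl⟩

lemma pm_mem_span_CF (n : ℕ) (J : Ideal (MvPolynomial (Fin n) (ZMod 2))) :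
    ∀ d (f : MvPolynomial (Fin n) (ZMod 2)), f.totalDegree = d → IsPseudoMonomial n f →
      f ∈ J → f ∈ Ideal.span (CF n J) := by
  intro d
  induction d using Nat.strong_induction_on with
  | _ d ih =>
    intro f hdeg hPM hJ
    by_cases hmin : IsMinimalPM n J f
    · exact Ideal.subset_span hmin
    · have hex : ∃ g, IsPseudoMonomial n g ∧ g ∈ J ∧ g.totalDegree < f.totalDegree ∧
          ∃ h, f = g * h := by
        by_contra hc
        exact hmin ⟨hJ, hPM, hc⟩
      obtain ⟨g, hgPM, hgJ, hglt, h, rfl⟩ := hex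
      exact Ideal.mul_mem_right _ _ (ih g.totalDegree (hdeg ▸ hglt) g rfl hgPM hgJ)

lemma neuralIdeal_le_span_CF (n : ℕ) (Co : Set (Fin n → ZMod 2)) :
    neuralIdeal n Co ≤ Ideal.span (CF n (neuralIdeal n Co)) := by
  have : { p : MvPolynomial (Fin n) (ZMod 2) | ∃ v, v ∉ Co ∧ p = rho n v } ⊆
      ↑(Ideal.span (CF n (neuralIdeal n Co))) := by
    rintro p ⟨w, hw, rfl⟩
    obtain ⟨σ, τ, hd, heq⟩ := rho_isPM n w
    exact pm_mem_span_CF n _ _ _ rfl ⟨σ, τ, hd, heq⟩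
      (Ideal.subset_span ⟨w, hw, rfl⟩)
  calc neuralIdeal n Co = Ideal.span _ := rfl
    _ ≤ _ := Ideal.span_le.mpr this

end NeuralAux

/-- the canonical form of a realized code is exactly the union of the
Type 1, Type 2 and Type 3 relations, and these generate `J_C`. -/
theorem stmt2 (n : ℕ) (hn : 1 ≤ n) {Ω : Type*} [TopologicalSpace Ω]
    (U : Fin n → Set Ω) (Co : Set (Fin n → ZMod 2)) (hCo : Co = codeOfCover n U)
    (T1 T2 T3 : Set (MvPolynomial (Fin n) (ZMod 2)))
    (hT1 : T1 = { p | ∃ σ : Finset (Fin n), p = ∏ i ∈ σ, X i ∧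
        (⋂ i ∈ σ, U i) = ∅ ∧ ∀ γ ⊂ σ, (⋂ i ∈ γ, U i) ≠ ∅ })
    (hT2 : T2 = { p | ∃ σ τ : Finset (Fin n), σ.Nonempty ∧ τ.Nonempty ∧ Disjoint σ τ ∧
        p = (∏ i ∈ σ, X i) * ∏ i ∈ τ, (1 - X i) ∧
        (⋂ i ∈ σ, U i) ≠ ∅ ∧ (⋃ i ∈ τ, U i) ≠ Set.univ ∧
        (⋂ i ∈ σ, U i) ⊆ (⋃ i ∈ τ, U i) ∧
        (∀ γ ⊂ σ, ¬ (⋂ i ∈ γ, U i) ⊆ ⋃ i ∈ τ, U i) ∧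
        (∀ γ ⊂ τ, ¬ (⋂ i ∈ σ, U i) ⊆ ⋃ i ∈ γ, U i) })
    (hT3 : T3 = { p | ∃ τ : Finset (Fin n), p = ∏ i ∈ τ, (1 - X i) ∧
        Set.univ ⊆ (⋃ i ∈ τ, U i) ∧ ∀ γ ⊂ τ, ¬ Set.univ ⊆ ⋃ i ∈ γ, U i }) :
    CF n (neuralIdeal n Co) = T1 ∪ T2 ∪ T3 ∧
      neuralIdeal n Co = Ideal.span (T1 ∪ T2 ∪ T3) := by
  classical
  subst hCo
  set J := neuralIdeal n (codeOfCover n U) with hJdef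
  have key : ∀ σ τ : Finset (Fin n), Disjoint σ τ →
      (pm n σ τ ∈ J ↔ (⋂ i ∈ σ, U i) ⊆ ⋃ j ∈ τ, U j) := fun σ τ hd =>
    (pm_mem_iff n _ σ τ hd).trans (cover_iff n U σ τ)
  have hUmono : ∀ a b : Finset (Fin n), a ⊆ b → (⋃ j ∈ a, U j) ⊆ ⋃ j ∈ b, U j :=
    fun a b hab => Set.iUnion₂_subset fun j hj =>
      Set.subset_iUnion₂ (s := fun j (_ : j ∈ b) => U j) j (hab hj)
  have part1 : CF n J = T1 ∪ T2 ∪ T3 := ?_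
  · refine ⟨part1, le_antisymm ?_ ?_⟩
    · rw [← part1]
      exact neuralIdeal_le_span_CF n _
    · rw [← part1]
      exact Ideal.span_le.mpr fun f hf => hf.1
  subst hT1 hT2 hT3
  ext f
  constructor
  · rintro ⟨hJf, ⟨σ, τ, hd, hfe⟩, hmin⟩
    subst hfe
    rw [show ((∏ i ∈ σ, X i) * ∏ j ∈ τ, (1 - X j)) = pm n σ τ from rfl] at hJf hmin ⊢
    have hmin' : ∀ σ' τ' : Finset (Fin n), σ' ⊆ σ → τ' ⊆ τ →
        σ'.card + τ'.card < σ.card + τ.card → pm n σ' τ' ∉ J := by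
      intro σ' τ' hσ' hτ' hcard hmem
      apply hmin
      refine ⟨pm n σ' τ', ⟨σ', τ', hd.mono hσ' hτ', rfl⟩, hmem, ?_,
        pm n (σ \ σ') (τ \ τ'), pm_factor n σ τ σ' τ' hσ' hτ'⟩
      rw [pm_totalDegree n σ' τ' (hd.mono hσ' hτ'), pm_totalDegree n σ τ hd]
      exact hcard
    have hsub : (⋂ i ∈ σ, U i) ⊆ ⋃ j ∈ τ, U j := (key σ τ hd).mp hJf
    rcases eq_or_ne τ ∅ with rfl | hτne
    · left; left
      refine ⟨σ, by simp [pm], ?_, ?_⟩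
      · have := hsub
        simp only [Finset.notMem_empty, Set.iUnion_of_empty, Set.iUnion_empty] at this
        exact Set.subset_empty_iff.mp this
      · intro γ hγ hγe
        refine hmin' γ ∅ hγ.subset subset_rfl ?_ ((key γ ∅ (Finset.disjoint_empty_right γ)).mpr ?_)
        · simpa using Finset.card_lt_card hγ
        · simp [hγe]
    · rcases eq_or_ne σ ∅ with rfl | hσne
      · right
        refine ⟨τ, by simp [pm], ?_, ?_⟩
        · have := hsub
          simpa using this
        · intro γ hγ hγs
          refine hmin' ∅ γ subset_rfl hγ.subset ?_ ((key ∅ γ (Finset.disjoint_empty_left γ)).mpr ?_)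
          · simpa using Finset.card_lt_card hγ
          · simpa using hγs
      · left; right
        have hσpos : 0 < σ.card := Finset.card_pos.mpr (Finset.nonempty_of_ne_empty hσne)
        have hτpos : 0 < τ.card := Finset.card_pos.mpr (Finset.nonempty_of_ne_empty hτne)
        refine ⟨σ, τ, Finset.nonempty_of_ne_empty hσne, Finset.nonempty_of_ne_empty hτne,
          hd, rfl, ?_, ?_, hsub, ?_, ?_⟩
        · intro he
          refine hmin' σ ∅ subset_rfl (Finset.empty_subset τ) (by simpa using hτpos)
            ((key σ ∅ (Finset.disjoint_empty_right σ)).mpr ?_)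
          simp [he]
        · intro he
          refine hmin' ∅ τ (Finset.empty_subset σ) subset_rfl (by simpa using hσpos)
            ((key ∅ τ (Finset.disjoint_empty_left τ)).mpr ?_)
          simp [he]
        · intro γ hγ hγs
          refine hmin' γ τ hγ.subset subset_rfl ?_
            ((key γ τ (hd.mono_left hγ.subset)).mpr hγs)
          have := Finset.card_lt_card hγ
          omega
        · intro γ hγ hγs
          refine hmin' σ γ subset_rfl hγ.subset ?_
            ((key σ γ (hd.mono_right hγ.subset)).mpr hγs)
          have := Finset.card_lt_card hγ
          omega
  · rintro ((⟨σ, rfl, hem, hminU⟩ | ⟨σ, τ, hσ, hτ, hd, rfl, hU1, hU2, hsub, hm1, hm2⟩) |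
      ⟨τ, rfl, hsub, hminU⟩)
    · -- T1
      rw [show (∏ i ∈ σ, X i : MvPolynomial (Fin n) (ZMod 2)) = pm n σ ∅ by simp [pm]]
      refine ⟨(key σ ∅ (Finset.disjoint_empty_right σ)).mpr (by simp [hem]),
        ⟨σ, ∅, Finset.disjoint_empty_right σ, by simp [pm]⟩, ?_⟩
      rintro ⟨g, ⟨σ', τ', hd', rfl⟩, hgJ, hdeg, q, hfq⟩
      obtain ⟨hσ', hτ'⟩ := pm_divisor n σ ∅ σ' τ' (Finset.disjoint_empty_right σ) q hfq
      have hτ'e : τ' = ∅ := Finset.subset_empty.mp hτ'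
      subst hτ'e
      have hne : σ' ≠ σ := by
        intro h
        subst h
        exact absurd hdeg (lt_irrefl _)
      have hss : σ' ⊂ σ := Finset.ssubset_iff_subset_ne.mpr ⟨hσ', hne⟩
      have := (key σ' ∅ (Finset.disjoint_empty_right σ')).mp hgJ
      simp only [Finset.notMem_empty, Set.iUnion_of_empty, Set.iUnion_empty] at this
      exact hminU σ' hss (Set.subset_empty_iff.mp this)
    · -- T2
      rw [show ((∏ i ∈ σ, X i) * ∏ j ∈ τ, (1 - X j) : MvPolynomial (Fin n) (ZMod 2)) =
        pm n σ τ from rfl]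
      refine ⟨(key σ τ hd).mpr hsub, ⟨σ, τ, hd, rfl⟩, ?_⟩
      rintro ⟨g, ⟨σ', τ', hd', rfl⟩, hgJ, hdeg, q, hfq⟩
      obtain ⟨hσ', hτ'⟩ := pm_divisor n σ τ σ' τ' hd q hfq
      have hgJ' : (⋂ i ∈ σ', U i) ⊆ ⋃ j ∈ τ', U j := (key σ' τ' (hd.mono hσ' hτ')).mp hgJ
      rcases eq_or_ne σ' σ with rfl | hσne
      · have hne : τ' ≠ τ := by
          intro h
          subst h
          exact absurd hdeg (lt_irrefl _)
        exact hm2 τ' (Finset.ssubset_iff_subset_ne.mpr ⟨hτ', hne⟩) hgJ'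
      · exact hm1 σ' (Finset.ssubset_iff_subset_ne.mpr ⟨hσ', hσne⟩)
          (hgJ'.trans (hUmono τ' τ hτ'))
    · -- T3
      rw [show (∏ j ∈ τ, (1 - X j) : MvPolynomial (Fin n) (ZMod 2)) = pm n ∅ τ by simp [pm]]
      refine ⟨(key ∅ τ (Finset.disjoint_empty_left τ)).mpr (by simpa using hsub),
        ⟨∅, τ, Finset.disjoint_empty_left τ, by simp [pm]⟩, ?_⟩
      rintro ⟨g, ⟨σ', τ', hd', rfl⟩, hgJ, hdeg, q, hfq⟩
      obtain ⟨hσ', hτ'⟩ := pm_divisor n ∅ τ σ' τ' (Finset.disjoint_empty_left τ) q hfq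
      have hσ'e : σ' = ∅ := Finset.subset_empty.mp hσ'
      subst hσ'e
      have hne : τ' ≠ τ := by
        intro h
        subst h
        exact absurd hdeg (lt_irrefl _)
      have := (key ∅ τ' (Finset.disjoint_empty_left τ')).mp hgJ
      exact hminU τ' (Finset.ssubset_iff_subset_ne.mpr ⟨hτ', hne⟩) (by simpa using this)
end

section
/- Let C ⊆ {0,1}ⁿ be a neural code and U = {U_1,…,U_n} open subsets of a topological space X with C = C(U). If ∏_{i∈τ}(1 − x_i) ∈ CF(J_C) for some τ ⊆ {1,…,n}, then X ⊆ ⋃_{i∈τ} U_i, while X ⊄ ⋃_{i∈γ} U_i for every proper subset γ ⊊ τ. -/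
open MvPolynomial

/-!
A polynomial of `J_C` vanishes at every codeword, and the codeword of a point `x` of the space
makes `∏_{i∈τ} (1 - x_i)` evaluate to `1` unless `x ∈ U_i` for some `i ∈ τ`; hence `τ` covers.
Conversely, if `γ` covers, every word vanishing on `γ` lies outside the code, and
`∏_{i∈γ} (1 - x_i)` is the sum of the `ρ_v` over exactly these words (over `𝔽₂` the two
factors `1 - x_i` and `-x_i` of a free coordinate add up to `1`), so it lies in `J_C`.
For `γ ⊊ τ` it is then a pseudo-monomial of `J_C` of smaller degree dividing
`∏_{i∈τ} (1 - x_i)`, against minimality.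
-/

open Finset

section Degree

variable {σ R : Type*} [CommRing R] [IsDomain R]

lemma MvPolynomial.totalDegree_one_sub_X (i : σ) :
    (1 - X i : MvPolynomial σ R).totalDegree = 1 := by
  rw [sub_eq_add_neg, totalDegree_add_eq_right_of_totalDegree_lt] <;>
    simp [totalDegree_neg, totalDegree_X]

lemma MvPolynomial.totalDegree_prod_one_sub_X (s : Finset σ) :
    (∏ i ∈ s, (1 - X i : MvPolynomial σ R)).totalDegree = #s := by
  classical
  induction s using Finset.induction_on with
  | empty => simp
  | insert i s hi ih =>
    have hne : ∀ j : σ, (1 - X j : MvPolynomial σ R) ≠ 0 := fun j h => by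
      simpa [h] using totalDegree_one_sub_X (R := R) j
    rw [prod_insert hi, totalDegree_mul_of_isDomain (hne i) (prod_ne_zero_iff.2 fun j _ => hne j),
      totalDegree_one_sub_X, ih, card_insert_of_notMem hi, add_comm]

end Degree

section NeuralIdeal

variable {n : ℕ}

lemma isPseudoMonomial_prod_one_sub_X (τ : Finset (Fin n)) :
    IsPseudoMonomial n (∏ i ∈ τ, (1 - X i)) :=
  ⟨∅, τ, disjoint_empty_left τ, by rw [prod_empty, one_mul]⟩

lemma eval_rho_of_ne {v w : Fin n → ZMod 2} (hvw : v ≠ w) : eval w (rho n v) = 0 := by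
  obtain ⟨i, hi⟩ := Function.ne_iff.mp hvw
  have one_sub_sub_of_ne : ∀ a b : ZMod 2, a ≠ b → 1 - a - b = 0 := by decide
  rw [rho, map_prod]
  exact prod_eq_zero (mem_univ i) (by simpa using one_sub_sub_of_ne _ _ hi)

lemma neuralIdeal_le_ker_eval {Co : Set (Fin n → ZMod 2)} {v : Fin n → ZMod 2} (hv : v ∈ Co) :
    neuralIdeal n Co ≤ RingHom.ker (eval v) :=
  Ideal.span_le.2 <| by
    rintro _ ⟨w, hw, rfl⟩
    exact eval_rho_of_ne (ne_of_mem_of_not_mem hv hw).symm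

lemma prod_one_sub_X_eq_sum_rho (γ : Finset (Fin n)) :
    ∏ i ∈ γ, (1 - X i : MvPolynomial (Fin n) (ZMod 2)) =
      ∑ v ∈ Fintype.piFinset (fun i => if i ∈ γ then {0} else univ), rho n v := by
  have hfactor : ∀ i : Fin n,
      ∑ a ∈ (if i ∈ γ then {0} else univ), (1 - C a - X i : MvPolynomial (Fin n) (ZMod 2)) =
        if i ∈ γ then 1 - X i else 1 := by
    intro i
    split_ifs
    · simp
    · rw [show (univ : Finset (ZMod 2)) = {0, 1} from rfl, sum_pair zero_ne_one]
      simp only [map_zero, map_one, sub_zero, sub_self, zero_sub]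
      linear_combination (-X i) * CharTwo.two_eq_zero (R := MvPolynomial (Fin n) (ZMod 2))
  calc ∏ i ∈ γ, (1 - X i)
      = ∏ i, if i ∈ γ then 1 - X i else 1 := by rw [prod_ite_mem, univ_inter]
    _ = ∏ i, ∑ a ∈ (if i ∈ γ then {0} else univ), (1 - C a - X i) :=
        prod_congr rfl fun i _ => (hfactor i).symm
    _ = _ := prod_univ_sum _ _

section Cover

variable {Ω : Type*} [TopologicalSpace Ω] (U : Fin n → Set Ω)

lemma exists_mem_codeOfCover_forall_eq_one_iff (x : Ω) :
    ∃ v ∈ codeOfCover n U, ∀ i, v i = 1 ↔ x ∈ U i := by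
  classical
  refine ⟨fun i => if x ∈ U i then 1 else 0, ⟨x, by simp, by simp⟩, fun i => ?_⟩
  by_cases h : x ∈ U i <;> simp [h]

lemma notMem_codeOfCover_of_univ_subset {γ : Finset (Fin n)} (hγ : Set.univ ⊆ ⋃ i ∈ γ, U i)
    {v : Fin n → ZMod 2} (hv : ∀ i ∈ γ, v i = 0) : v ∉ codeOfCover n U := by
  rintro ⟨x, -, hx⟩
  obtain ⟨i, hi, hxi⟩ := Set.mem_iUnion₂.1 (hγ (Set.mem_univ x))
  exact hx (Set.mem_biUnion (hv i hi) hxi)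

theorem prod_one_sub_X_mem_neuralIdeal_codeOfCover_iff (γ : Finset (Fin n)) :
    ∏ i ∈ γ, (1 - X i) ∈ neuralIdeal n (codeOfCover n U) ↔ Set.univ ⊆ ⋃ i ∈ γ, U i := by
  constructor
  · intro hmem x _
    obtain ⟨v, hv, hvU⟩ := exists_mem_codeOfCover_forall_eq_one_iff U x
    have h0 : ∏ i ∈ γ, (1 - v i) = 0 := by simpa using neuralIdeal_le_ker_eval hv hmem
    obtain ⟨i, hi, hvi⟩ := prod_eq_zero_iff.1 h0
    exact Set.mem_biUnion hi ((hvU i).1 (sub_eq_zero.1 hvi).symm)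
  · intro hcov
    rw [prod_one_sub_X_eq_sum_rho]
    refine Ideal.sum_mem _ fun v hv => Ideal.subset_span
      ⟨v, notMem_codeOfCover_of_univ_subset U hcov fun i hi => ?_, rfl⟩
    simpa [hi] using Fintype.mem_piFinset.1 hv i

end Cover

end NeuralIdeal

theorem stmt5_general (n : ℕ) {Ω : Type*} [TopologicalSpace Ω]
    (U : Fin n → Set Ω) (Co : Set (Fin n → ZMod 2)) (hCo : Co = codeOfCover n U)
    (τ : Finset (Fin n)) (h : (∏ i ∈ τ, (1 - X i)) ∈ CF n (neuralIdeal n Co)) :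
    Set.univ ⊆ (⋃ i ∈ τ, U i) ∧ ∀ γ ⊂ τ, ¬ Set.univ ⊆ ⋃ i ∈ γ, U i := by
  subst hCo
  obtain ⟨hmem, -, hmin⟩ := h
  refine ⟨(prod_one_sub_X_mem_neuralIdeal_codeOfCover_iff U τ).1 hmem, fun γ hγτ hcov => hmin
    ⟨_, isPseudoMonomial_prod_one_sub_X γ,
      (prod_one_sub_X_mem_neuralIdeal_codeOfCover_iff U γ).2 hcov, ?_,
      ∏ i ∈ τ \ γ, (1 - X i), (prod_sdiff hγτ.subset).symm.trans (mul_comm _ _)⟩⟩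
  simpa only [totalDegree_prod_one_sub_X] using card_lt_card hγτ

/-- Type 3 relations. -/
theorem stmt5 (n : ℕ) (hn : 1 ≤ n) {Ω : Type*} [TopologicalSpace Ω]
    (U : Fin n → Set Ω) (Co : Set (Fin n → ZMod 2)) (hCo : Co = codeOfCover n U)
    (τ : Finset (Fin n)) (h : (∏ i ∈ τ, (1 - X i)) ∈ CF n (neuralIdeal n Co)) :
    Set.univ ⊆ (⋃ i ∈ τ, U i) ∧ ∀ γ ⊂ τ, ¬ Set.univ ⊆ ⋃ i ∈ γ, U i :=
  stmt5_general n U Co hCo τ h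
end

section
/- Let C, D ⊆ {0,1}ⁿ be neural codes. Then every minimal reduced product lies in the neural ideal of the union: MP(C, D) ⊆ J_{C∪D}. -/
open MvPolynomial

lemma zmod2_pow (a : ZMod 2) (e : ℕ) : a ^ min e 1 = a ^ e := by
  rcases e with _ | e
  · simp
  · have h2 : a * a = a := by revert a; decide
    have key : ∀ k, a ^ (k + 1) = a := by
      intro k
      induction k with
      | zero => simp
      | succ k ih => rw [pow_succ, ih, h2]
    rw [min_eq_right (by omega), pow_one, key]

lemma eval_sqReduce (n : ℕ) (v : Fin n → ZMod 2) (q : MvPolynomial (Fin n) (ZMod 2)) :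
    eval v (sqReduce n q) = eval v q := by
  unfold sqReduce
  rw [map_sum]
  conv_rhs => rw [← support_sum_monomial_coeff q, map_sum]
  refine Finset.sum_congr rfl fun m _ => ?_
  rw [eval_monomial, eval_monomial]
  congr 1
  rw [Finsupp.prod_mapRange_index (by simp)]
  exact Finsupp.prod_congr fun i _ => zmod2_pow _ _

lemma sqReduce_squarefree (n : ℕ) (q : MvPolynomial (Fin n) (ZMod 2)) :
    IsSquareFreePoly n (sqReduce n q) := by
  intro m hm i
  unfold sqReduce at hm
  have h1 := MvPolynomial.support_sum hm
  rw [Finset.mem_biUnion] at h1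
  obtain ⟨m', _, hm'⟩ := h1
  have h2 := MvPolynomial.support_monomial_subset hm'
  rw [Finset.mem_singleton] at h2
  subst h2
  simp [Finsupp.mapRange_apply]

lemma eval_neuralIdeal (n : ℕ) (S : Set (Fin n → ZMod 2)) (q : MvPolynomial (Fin n) (ZMod 2))
    (hq : q ∈ neuralIdeal n S) (v : Fin n → ZMod 2) (hv : v ∈ S) : eval v q = 0 := by
  have hle : neuralIdeal n S ≤ RingHom.ker (eval v) := by
    rw [neuralIdeal, Ideal.span_le]
    rintro p ⟨w, hw, rfl⟩
    have hwv : w ≠ v := fun h => hw (h ▸ hv)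
    obtain ⟨i, hi⟩ := Function.ne_iff.mp hwv
    rw [SetLike.mem_coe, RingHom.mem_ker, rho, map_prod]
    refine Finset.prod_eq_zero (Finset.mem_univ i) ?_
    simp only [map_sub, map_one, eval_C, eval_X]
    revert hi
    generalize (w i) = a
    generalize (v i) = b
    revert a b; decide
  exact hle hq

lemma rho_sum (n : ℕ) (σ : Finset (Fin n)) :
    ∑ v : Fin n → ZMod 2, C (∏ i ∈ σ, v i) * rho n v = ∏ i ∈ σ, X i := by
  have key : ∀ v : Fin n → ZMod 2,
      C (∏ i ∈ σ, v i) * rho n v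
        = ∏ i : Fin n, ((if i ∈ σ then C (v i) else 1) * (1 - C (v i) - X i)) := by
    intro v
    rw [Finset.prod_mul_distrib, rho]
    congr 1
    rw [map_prod, Finset.prod_ite_mem, Finset.univ_inter]
  simp only [key]
  have swap : ∑ v : Fin n → ZMod 2,
      ∏ i : Fin n, ((if i ∈ σ then C (v i) else 1) * (1 - C (v i) - X i))
      = ∏ i : Fin n, ∑ a : ZMod 2, ((if i ∈ σ then C a else 1) * (1 - C a - X i)) := by
    rw [Finset.prod_univ_sum (fun _ => (Finset.univ : Finset (ZMod 2)))
      (fun i a => (if i ∈ σ then C a else 1) * (1 - C a - X i)), Fintype.piFinset_univ]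
  rw [swap]
  have step : ∀ i : Fin n,
      (∑ a : ZMod 2, ((if i ∈ σ then C a else 1) * (1 - C a - X i)))
        = if i ∈ σ then X i else 1 := by
    intro i
    have hsum : (∑ a : ZMod 2, ((if i ∈ σ then C a else 1) * (1 - C a - X i)))
        = ((if i ∈ σ then C (0:ZMod 2) else 1) * (1 - C (0:ZMod 2) - X i))
          + ((if i ∈ σ then C (1:ZMod 2) else 1) * (1 - C (1:ZMod 2) - X i)) :=
      Fin.sum_univ_two _
    rw [hsum]
    have h2 : (2 : MvPolynomial (Fin n) (ZMod 2)) = 0 := CharTwo.two_eq_zero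
    by_cases h : i ∈ σ
    · simp only [h, if_true, map_zero, map_one]
      linear_combination (- X i) * h2
    · simp only [h, if_false, map_zero, map_one, one_mul]
      linear_combination (- X i) * h2
  simp only [step]
  rw [Finset.prod_ite_mem, Finset.univ_inter]

lemma squarefree_decomp (n : ℕ) (p : MvPolynomial (Fin n) (ZMod 2))
    (hp : IsSquareFreePoly n p) :
    p = ∑ v : Fin n → ZMod 2, C (eval v p) * rho n v := by
  conv_lhs => rw [← support_sum_monomial_coeff p]
  have : ∀ v : Fin n → ZMod 2, C (eval v p) * rho n v
      = ∑ m ∈ p.support, C (eval v (monomial m (coeff m p))) * rho n v := by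
    intro v
    conv_lhs => rw [← support_sum_monomial_coeff p]
    rw [map_sum, map_sum, Finset.sum_mul]
  simp only [this]
  rw [Finset.sum_comm]
  refine Finset.sum_congr rfl fun m hm => ?_
  -- now: monomial m (coeff m p) = ∑ v, C (eval v (monomial m (coeff m p))) * rho n v
  have hsf : ∀ i, m i ≤ 1 := hp m hm
  have hmono : (monomial m (coeff m p) : MvPolynomial (Fin n) (ZMod 2))
      = C (coeff m p) * ∏ i ∈ m.support, X i := by
    rw [monomial_eq]
    congr 1
    rw [Finsupp.prod]
    refine Finset.prod_congr rfl fun i hi => ?_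
    have h1 : m i = 1 := le_antisymm (hsf i) (Finsupp.mem_support_iff.mp hi |> Nat.one_le_iff_ne_zero.mpr)
    rw [h1, pow_one]
  have heval : ∀ v : Fin n → ZMod 2,
      eval v (monomial m (coeff m p)) = coeff m p * ∏ i ∈ m.support, v i := by
    intro v
    rw [eval_monomial]
    congr 1
    rw [Finsupp.prod]
    refine Finset.prod_congr rfl fun i hi => ?_
    have h1 : m i = 1 := le_antisymm (hsf i) (Finsupp.mem_support_iff.mp hi |> Nat.one_le_iff_ne_zero.mpr)
    rw [h1, pow_one]
  simp only [heval, map_mul, mul_assoc]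
  rw [← Finset.mul_sum, rho_sum n m.support, hmono]

/-- `MP(C, D) ⊆ J_{C∪D}`. -/
theorem stmt6 (n : ℕ) (hn : 1 ≤ n) (Co D : Set (Fin n → ZMod 2)) :
    ∀ h ∈ minReducedProducts n Co D, h ∈ neuralIdeal n (Co ∪ D) := by
  rintro h ⟨⟨f, hf, g, hg, rfl⟩, -, -⟩
  rw [squarefree_decomp n (sqReduce n (f * g)) (sqReduce_squarefree n (f * g))]
  refine Ideal.sum_mem _ fun v _ => ?_
  by_cases hv : v ∈ Co ∪ D
  · have hz : eval v (sqReduce n (f * g)) = 0 := by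
      rw [eval_sqReduce, map_mul]
      rcases hv with hv | hv
      · rw [eval_neuralIdeal n Co f hf.1 v hv, zero_mul]
      · rw [eval_neuralIdeal n D g hg.1 v hv, mul_zero]
    rw [hz, map_zero, zero_mul]
    exact Ideal.zero_mem _
  · refine Ideal.mul_mem_left _ _ ?_
    exact Ideal.subset_span ⟨v, hv, rfl⟩
end

section
/- Let C, D ⊆ {0,1}ⁿ be neural codes. Then every minimal pseudo-monomial of J_{C∪D} is a minimal reduced product: CF(J_{C∪D}) ⊆ MP(C, D). -/
open MvPolynomial

namespace NeuralAux

open Finset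

variable {n : ℕ}

noncomputable def PM (σ τ : Finset (Fin n)) : MvPolynomial (Fin n) (ZMod 2) :=
  (∏ i ∈ σ, X i) * ∏ j ∈ τ, (1 - X j)

lemma zmod2_cases : ∀ a : ZMod 2, a = 0 ∨ a = 1 := by decide

lemma zmod2_mul_self : ∀ a : ZMod 2, a * a = a := by decide

lemma zmod2_ne : ∀ a b : ZMod 2, a ≠ b → 1 - a - b = 0 := by decide

lemma zmod2_pow (a : ZMod 2) : ∀ e : ℕ, e ≠ 0 → a ^ e = a := by
  intro e he
  induction e with
  | zero => exact absurd rfl he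
  | succ k ih =>
    rcases Nat.eq_zero_or_pos k with hk | hk
    · subst hk; simp
    · rw [pow_succ, ih hk.ne', zmod2_mul_self]

lemma eval_PM (v : Fin n → ZMod 2) (σ τ : Finset (Fin n)) :
    eval v (PM σ τ) = (∏ i ∈ σ, v i) * ∏ j ∈ τ, (1 - v j) := by
  simp [PM]

lemma eval_rho (v w : Fin n → ZMod 2) (hne : w ≠ v) : eval v (rho n w) = 0 := by
  obtain ⟨i, hi⟩ : ∃ i, w i ≠ v i := by
    by_contra h; push_neg at h; exact hne (funext h)
  have h : eval v (rho n w) = ∏ i, (1 - w i - v i) := by simp [rho]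
  rw [h]
  exact Finset.prod_eq_zero (Finset.mem_univ i) (zmod2_ne _ _ hi)

lemma eval_eq_zero_of_mem {E : Set (Fin n → ZMod 2)} {p : MvPolynomial (Fin n) (ZMod 2)}
    (hp : p ∈ neuralIdeal n E) {v : Fin n → ZMod 2} (hv : v ∈ E) : eval v p = 0 := by
  have hle : neuralIdeal n E ≤ RingHom.ker (eval v) := by
    rw [neuralIdeal, Ideal.span_le]
    rintro q ⟨w, hw, rfl⟩
    exact RingHom.mem_ker.mpr (eval_rho v w (fun h => hw (h ▸ hv)))
  exact RingHom.mem_ker.mp (hle hp)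

lemma neuralIdeal_mono {E E' : Set (Fin n → ZMod 2)} (h : E ⊆ E') :
    neuralIdeal n E' ≤ neuralIdeal n E :=
  Ideal.span_mono (fun p hp => by
    obtain ⟨v, hv, hpv⟩ := hp
    exact ⟨v, fun hvE => hv (h hvE), hpv⟩)


lemma PM_mem_neuralIdeal (E : Set (Fin n → ZMod 2)) {σ τ : Finset (Fin n)} (hd : Disjoint σ τ)
    (hvan : ∀ v ∈ E, eval v (PM σ τ) = 0) : PM σ τ ∈ neuralIdeal n E := by
  classical
  set t : Fin n → Finset (ZMod 2) :=
    fun i => if i ∈ σ then {1} else if i ∈ τ then {0} else Finset.univ with ht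
  have h1 : ∀ i : Fin n, (∑ a ∈ t i, (1 - C a - X i : MvPolynomial (Fin n) (ZMod 2))) =
      if i ∈ σ then X i else if i ∈ τ then 1 - X i else 1 := by
    intro i
    by_cases hiσ : i ∈ σ
    · simp only [ht, hiσ, if_true, Finset.sum_singleton]
      rw [map_one, sub_self, zero_sub, CharTwo.neg_eq]
    · by_cases hiτ : i ∈ τ
      · simp only [ht, hiσ, hiτ, if_false, if_true, Finset.sum_singleton]
        rw [map_zero, sub_zero]
      · simp only [ht, hiσ, hiτ, if_false]
        have huniv : (Finset.univ : Finset (ZMod 2)) = {0, 1} := by decide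
        rw [huniv, Finset.sum_pair (by decide : (0 : ZMod 2) ≠ 1)]
        rw [show (1 - C (0:ZMod 2) - X i) + (1 - C (1:ZMod 2) - X i)
            = 1 - (X i + X i : MvPolynomial (Fin n) (ZMod 2)) by
          rw [map_zero, map_one]; ring]
        rw [CharTwo.add_self_eq_zero, sub_zero]
  have key : PM σ τ = ∑ x ∈ Fintype.piFinset t, rho n x := by
    have h2 : PM σ τ = ∏ i : Fin n,
        (if i ∈ σ then X i else if i ∈ τ then 1 - X i else (1 : MvPolynomial (Fin n) (ZMod 2))) := by
      rw [← Finset.prod_sdiff (Finset.subset_univ (σ ∪ τ))]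
      have hone : (∏ i ∈ Finset.univ \ (σ ∪ τ),
          (if i ∈ σ then X i else if i ∈ τ then 1 - X i else (1 : MvPolynomial (Fin n) (ZMod 2)))) = 1 := by
        refine Finset.prod_eq_one fun i hi => ?_
        rw [Finset.mem_sdiff, Finset.mem_union] at hi
        rw [if_neg (fun h => hi.2 (Or.inl h)), if_neg (fun h => hi.2 (Or.inr h))]
      rw [hone, one_mul, Finset.prod_union hd, PM]
      congr 1
      · exact (Finset.prod_congr rfl fun i hi => by rw [if_pos hi]).symm
      · refine (Finset.prod_congr rfl fun i hi => ?_).symm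
        rw [if_neg (Finset.disjoint_right.mp hd hi), if_pos hi]
    rw [h2, ← Finset.prod_congr rfl (fun i _ => h1 i), Finset.prod_univ_sum]
    rfl
  rw [key, neuralIdeal]
  refine Ideal.sum_mem _ fun x hx => Ideal.subset_span ⟨x, ?_, rfl⟩
  intro hxE
  have h0 := hvan x hxE
  have hx' := Fintype.mem_piFinset.mp hx
  have h1' : eval x (PM σ τ) = 1 := by
    rw [eval_PM]
    have hσv : ∀ i ∈ σ, x i = 1 := by
      intro i hi
      have := hx' i
      simp only [ht, hi, if_true, Finset.mem_singleton] at this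
      exact this
    have hτv : ∀ j ∈ τ, x j = 0 := by
      intro j hj
      have := hx' j
      simp only [ht, Finset.disjoint_right.mp hd hj, hj, if_false, if_true,
        Finset.mem_singleton] at this
      exact this
    have e1 : (∏ i ∈ σ, x i) = 1 := Finset.prod_eq_one (fun i hi => hσv i hi)
    have e2 : (∏ j ∈ τ, (1 - x j)) = 1 :=
      Finset.prod_eq_one (fun j hj => by rw [hτv j hj, sub_zero])
    rw [e1, e2, one_mul]
  rw [h0] at h1'
  exact one_ne_zero h1'.symm


noncomputable def ind (s : Finset (Fin n)) : Fin n →₀ ℕ := ∑ i ∈ s, Finsupp.single i 1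

lemma ind_apply (s : Finset (Fin n)) (j : Fin n) : ind s j = if j ∈ s then 1 else 0 := by
  classical
  rw [ind, Finset.sum_apply']
  simp only [Finsupp.single_apply]
  rw [Finset.sum_ite_eq' s j (fun _ => 1)]

lemma monomial_ind (s : Finset (Fin n)) :
    (monomial (ind s) (1 : ZMod 2)) = ∏ i ∈ s, X i := by
  classical
  induction s using Finset.induction_on with
  | empty => simp [ind]
  | @insert a s ha ih =>
    rw [Finset.prod_insert ha, ← ih]
    have h1 : (X a : MvPolynomial (Fin n) (ZMod 2)) * monomial (ind s) 1
        = monomial (Finsupp.single a 1 + ind s) 1 := by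
      rw [X, monomial_mul, one_mul]
    rw [h1, ind, Finset.sum_insert ha, ← ind]

lemma PM_expand {σ τ : Finset (Fin n)} (hd : Disjoint σ τ) :
    PM σ τ = ∑ t ∈ τ.powerset, monomial (ind (σ ∪ t)) (1 : ZMod 2) := by
  classical
  have h1 : ∀ j : Fin n, (1 : MvPolynomial (Fin n) (ZMod 2)) - X j = X j + 1 := fun j => by
    rw [CharTwo.sub_eq_add, add_comm]
  rw [PM, Finset.prod_congr rfl (fun j _ => h1 j), Finset.prod_add, Finset.mul_sum]
  refine Finset.sum_congr rfl fun t ht => ?_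
  rw [Finset.prod_const_one, mul_one,
    ← Finset.prod_union (hd.mono_right (Finset.mem_powerset.mp ht)), monomial_ind]

lemma PM_squareFree {σ τ : Finset (Fin n)} (hd : Disjoint σ τ) :
    IsSquareFreePoly n (PM σ τ) := by
  intro m hm i
  rw [PM_expand hd] at hm
  obtain ⟨t, ht, hmt⟩ := Finset.mem_biUnion.mp (MvPolynomial.support_sum hm)
  rw [support_monomial, if_neg one_ne_zero, Finset.mem_singleton] at hmt
  subst hmt
  rw [ind_apply]
  split <;> simp

lemma ind_sum_card (u : Finset (Fin n)) : (ind u).sum (fun _ e => e) = u.card := by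
  classical
  rw [Finsupp.sum]
  have hsupp : (ind u).support = u := by
    ext j
    rw [Finsupp.mem_support_iff, ind_apply]
    split <;> simp [*]
  rw [hsupp]
  rw [Finset.card_eq_sum_ones]
  exact Finset.sum_congr rfl fun j hj => by rw [ind_apply, if_pos hj]

lemma PM_coeff_top {σ τ : Finset (Fin n)} (hd : Disjoint σ τ) :
    coeff (ind (σ ∪ τ)) (PM σ τ) = 1 := by
  classical
  rw [PM_expand hd, MvPolynomial.coeff_sum]
  rw [Finset.sum_eq_single τ]
  · rw [coeff_monomial, if_pos rfl]
  · intro t ht hne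
    rw [coeff_monomial, if_neg]
    intro h
    apply hne
    refine Finset.Subset.antisymm (Finset.mem_powerset.mp ht) fun j hj => ?_
    have hj' := DFunLike.congr_fun h j
    rw [ind_apply, ind_apply, if_pos (Finset.mem_union_right σ hj)] at hj'
    by_cases hin : j ∈ σ ∪ t
    · rcases Finset.mem_union.mp hin with h' | h'
      · exact absurd hj (Finset.disjoint_left.mp hd h')
      · exact h'
    · rw [if_neg hin] at hj'; exact absurd hj' zero_ne_one
  · intro h; exact absurd (Finset.mem_powerset.mpr Finset.Subset.rfl) h

lemma PM_totalDegree {σ τ : Finset (Fin n)} (hd : Disjoint σ τ) :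
    (PM σ τ).totalDegree = σ.card + τ.card := by
  classical
  refine le_antisymm ?_ ?_
  · refine (totalDegree_mul _ _).trans (add_le_add ?_ ?_)
    · refine (totalDegree_finset_prod _ _).trans ?_
      simp [totalDegree_X]
    · refine (totalDegree_finset_prod _ _).trans ?_
      have hb : ∀ j ∈ τ, ((1 : MvPolynomial (Fin n) (ZMod 2)) - X j).totalDegree ≤ 1 := by
        intro j _
        simpa using totalDegree_sub (1 : MvPolynomial (Fin n) (ZMod 2)) (X j)
      have h2 := Finset.sum_le_sum (s := τ)
        (f := fun j => ((1 : MvPolynomial (Fin n) (ZMod 2)) - X j).totalDegree)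
        (g := fun _ => 1) hb
      simpa using h2
  · have hsup : ind (σ ∪ τ) ∈ (PM σ τ).support :=
      mem_support_iff.mpr (by rw [PM_coeff_top hd]; exact one_ne_zero)
    have := le_totalDegree hsup
    rwa [ind_sum_card, Finset.card_union_of_disjoint hd] at this


lemma sqReduce_squareFree (h : MvPolynomial (Fin n) (ZMod 2)) :
    IsSquareFreePoly n (sqReduce n h) := by
  intro m hm i
  obtain ⟨m', hm', hmt⟩ := Finset.mem_biUnion.mp (MvPolynomial.support_sum hm)
  rw [support_monomial, if_neg (mem_support_iff.mp hm'), Finset.mem_singleton] at hmt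
  subst hmt
  rw [Finsupp.mapRange_apply]
  exact min_le_right _ _

lemma eval_sqReduce (v : Fin n → ZMod 2) (h : MvPolynomial (Fin n) (ZMod 2)) :
    eval v (sqReduce n h) = eval v h := by
  conv_rhs => rw [h.as_sum]
  rw [sqReduce, map_sum, map_sum]
  refine Finset.sum_congr rfl fun m _ => ?_
  rw [eval_monomial, eval_monomial]
  congr 1
  rw [Finsupp.prod, Finsupp.prod]
  have hs : (Finsupp.mapRange (fun e => min e 1) (by simp) m).support = m.support := by
    ext i
    simp only [Finsupp.mem_support_iff, Finsupp.mapRange_apply]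
    omega
  rw [hs]
  refine Finset.prod_congr rfl fun i hi => ?_
  rw [Finsupp.mapRange_apply]
  have hne : m i ≠ 0 := Finsupp.mem_support_iff.mp hi
  rw [zmod2_pow _ _ (by omega), zmod2_pow _ _ hne]

lemma sqFree_eq_zero {p : MvPolynomial (Fin n) (ZMod 2)} (hp : IsSquareFreePoly n p)
    (h0 : ∀ v, eval v p = 0) : p = 0 := by
  refine MvPolynomial.eq_zero_of_eval_eq_zero (Fin n) (ZMod 2) p h0 ?_
  rw [MvPolynomial.mem_restrictDegree]
  intro s hs i
  have hcard : Fintype.card (ZMod 2) = 2 := ZMod.card 2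
  rw [hcard]
  exact hp s hs i

lemma sqReduce_unique {p h : MvPolynomial (Fin n) (ZMod 2)} (hp : IsSquareFreePoly n p)
    (he : ∀ v, eval v p = eval v h) : p = sqReduce n h := by
  have hd : IsSquareFreePoly n (p - sqReduce n h) := by
    intro m hm i
    rcases Finset.mem_union.mp (MvPolynomial.support_sub _ p (sqReduce n h) hm) with h1 | h2
    · exact hp m h1 i
    · exact sqReduce_squareFree h m h2 i
  have h0 := sqFree_eq_zero hd (fun v => by
    rw [map_sub, eval_sqReduce, he, sub_self])
  exact sub_eq_zero.mp h0

lemma eval_PM_mul (v : Fin n → ZMod 2) (σ₁ τ₁ σ₂ τ₂ : Finset (Fin n)) :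
    eval v (PM σ₁ τ₁ * PM σ₂ τ₂) = eval v (PM (σ₁ ∪ σ₂) (τ₁ ∪ τ₂)) := by
  classical
  have habs : ∀ (s t : Finset (Fin n)) (F : Fin n → ZMod 2),
      (∏ i ∈ s, F i) * ∏ i ∈ t, F i = ∏ i ∈ s ∪ t, F i := by
    intro s t F
    have hid : (∏ i ∈ s ∩ t, F i) * ∏ i ∈ s ∩ t, F i = ∏ i ∈ s ∩ t, F i := by
      rw [← Finset.prod_mul_distrib]
      exact Finset.prod_congr rfl fun i _ => zmod2_mul_self (F i)
    calc (∏ i ∈ s, F i) * ∏ i ∈ t, F i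
        = ((∏ i ∈ s ∪ t, F i) * ∏ i ∈ s ∩ t, F i) := (Finset.prod_union_inter).symm
      _ = ((∏ i ∈ (s ∪ t) \ (s ∩ t), F i) * ∏ i ∈ s ∩ t, F i) * ∏ i ∈ s ∩ t, F i := by
          rw [Finset.prod_sdiff (Finset.inter_subset_union)]
      _ = (∏ i ∈ (s ∪ t) \ (s ∩ t), F i) * ((∏ i ∈ s ∩ t, F i) * ∏ i ∈ s ∩ t, F i) :=
          mul_assoc _ _ _
      _ = (∏ i ∈ (s ∪ t) \ (s ∩ t), F i) * ∏ i ∈ s ∩ t, F i := by rw [hid]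
      _ = ∏ i ∈ s ∪ t, F i := Finset.prod_sdiff (Finset.inter_subset_union)
  rw [map_mul, eval_PM, eval_PM, eval_PM, mul_mul_mul_comm, habs, habs]

lemma sqReduce_PM_mul {σ₁ τ₁ σ₂ τ₂ : Finset (Fin n)} (hd : Disjoint (σ₁ ∪ σ₂) (τ₁ ∪ τ₂)) :
    sqReduce n (PM σ₁ τ₁ * PM σ₂ τ₂) = PM (σ₁ ∪ σ₂) (τ₁ ∪ τ₂) :=
  (sqReduce_unique (PM_squareFree hd) (fun v => (eval_PM_mul v σ₁ τ₁ σ₂ τ₂).symm)).symm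

lemma sqReduce_PM_mul_zero {σ₁ τ₁ σ₂ τ₂ : Finset (Fin n)}
    (hd : ¬ Disjoint (σ₁ ∪ σ₂) (τ₁ ∪ τ₂)) :
    sqReduce n (PM σ₁ τ₁ * PM σ₂ τ₂) = 0 := by
  obtain ⟨i, hi1, hi2⟩ := Finset.not_disjoint_iff.mp hd
  refine (sqReduce_unique (fun m hm => by simp at hm) fun v => ?_).symm
  rw [eval_PM_mul, eval_PM, map_zero]
  rcases zmod2_cases (v i) with h | h
  · rw [Finset.prod_eq_zero hi1 h, zero_mul]
  · rw [Finset.prod_eq_zero hi2 (by rw [h, sub_self]), mul_zero]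

lemma PM_split {s₁ s t₁ t : Finset (Fin n)} (hs : s₁ ⊆ s) (ht : t₁ ⊆ t) :
    PM s t = PM s₁ t₁ * PM (s \ s₁) (t \ t₁) := by
  classical
  have h1 := Finset.prod_sdiff (f := fun i => (X i : MvPolynomial (Fin n) (ZMod 2))) hs
  have h2 := Finset.prod_sdiff (f := fun j => (1 - X j : MvPolynomial (Fin n) (ZMod 2))) ht
  rw [PM, PM, PM, ← h1, ← h2]
  ring

lemma PM_ne_zero {σ τ : Finset (Fin n)} (hd : Disjoint σ τ) : PM σ τ ≠ 0 := by
  intro h0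
  have h1 : eval (fun k => if k ∈ σ then 1 else 0) (PM σ τ) = 1 := by
    rw [eval_PM]
    have e1 : (∏ i ∈ σ, (if i ∈ σ then (1 : ZMod 2) else 0)) = 1 :=
      Finset.prod_eq_one fun i hi => if_pos hi
    have e2 : (∏ j ∈ τ, ((1 : ZMod 2) - if j ∈ σ then 1 else 0)) = 1 :=
      Finset.prod_eq_one fun j hj => by
        rw [if_neg (Finset.disjoint_right.mp hd hj), sub_zero]
    rw [e1, e2, one_mul]
  rw [h0, map_zero] at h1
  exact zero_ne_one h1

lemma PM_dvd_subsets {σ τ σ₁ τ₁ : Finset (Fin n)} (hd : Disjoint σ τ)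
    {h : MvPolynomial (Fin n) (ZMod 2)}
    (heq : PM σ₁ τ₁ * h = PM σ τ) : σ₁ ⊆ σ ∧ τ₁ ⊆ τ := by
  classical
  constructor
  · intro i hi
    by_contra hiσ
    set v : Fin n → ZMod 2 := fun k => if k = i then 0 else if k ∈ σ then 1 else 0 with hv
    have h2 : eval v (PM σ τ) = 1 := by
      rw [eval_PM]
      have e1 : (∏ k ∈ σ, v k) = 1 := Finset.prod_eq_one fun k hk => by
        rw [hv]; simp only []
        rw [if_neg (fun hki : k = i => hiσ (hki ▸ hk)), if_pos hk]
      have e2 : (∏ k ∈ τ, (1 - v k)) = 1 := Finset.prod_eq_one fun k hk => by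
        rw [hv]; simp only []
        by_cases hki : k = i
        · rw [if_pos hki, sub_zero]
        · rw [if_neg hki, if_neg (Finset.disjoint_right.mp hd hk), sub_zero]
      rw [e1, e2, one_mul]
    have h3 : eval v (PM σ₁ τ₁ * h) = 0 := by
      rw [map_mul, eval_PM]
      rw [Finset.prod_eq_zero hi (show v i = 0 by rw [hv]; simp), zero_mul, zero_mul]
    rw [heq, h2] at h3
    exact one_ne_zero h3
  · intro j hj
    by_contra hjτ
    set v : Fin n → ZMod 2 := fun k => if k = j then 1 else if k ∈ σ then 1 else 0 with hv
    have h2 : eval v (PM σ τ) = 1 := by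
      rw [eval_PM]
      have e1 : (∏ k ∈ σ, v k) = 1 := Finset.prod_eq_one fun k hk => by
        rw [hv]; simp only []
        by_cases hkj : k = j
        · rw [if_pos hkj]
        · rw [if_neg hkj, if_pos hk]
      have e2 : (∏ k ∈ τ, (1 - v k)) = 1 := Finset.prod_eq_one fun k hk => by
        rw [hv]; simp only []
        rw [if_neg (fun hkj : k = j => hjτ (hkj ▸ hk)), if_neg (Finset.disjoint_right.mp hd hk),
          sub_zero]
      rw [e1, e2, one_mul]
    have h3 : eval v (PM σ₁ τ₁ * h) = 0 := by
      rw [map_mul, eval_PM]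
      rw [Finset.prod_eq_zero hj (show (1 : ZMod 2) - v j = 0 by rw [hv]; simp), mul_zero,
        zero_mul]
    rw [heq, h2] at h3
    exact one_ne_zero h3


end NeuralAux

open NeuralAux in
lemma exists_minimal_pm_dvd {n : ℕ} {E : Set (Fin n → ZMod 2)}
    {f : MvPolynomial (Fin n) (ZMod 2)}
    (hf : IsPseudoMonomial n f) (hfE : f ∈ neuralIdeal n E) :
    ∃ g ∈ CF n (neuralIdeal n E), g ∣ f := by
  classical
  have hP : ∃ d : ℕ, ∃ g, IsPseudoMonomial n g ∧ g ∈ neuralIdeal n E ∧ g ∣ f ∧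
      g.totalDegree = d := ⟨f.totalDegree, f, hf, hfE, dvd_rfl, rfl⟩
  obtain ⟨g, hgPM, hgE, hgdvd, hgdeg⟩ := Nat.find_spec hP
  refine ⟨g, ⟨hgE, hgPM, ?_⟩, hgdvd⟩
  rintro ⟨g', hg'PM, hg'E, hdeg, h, hgh⟩
  exact Nat.find_min hP (hgdeg ▸ hdeg) ⟨g', hg'PM, hg'E, dvd_trans ⟨h, hgh⟩ hgdvd, rfl⟩

/-- `CF(J_{C∪D}) ⊆ MP(C, D)`. -/
theorem stmt7 (n : ℕ) (hn : 1 ≤ n) (Co D : Set (Fin n → ZMod 2)) :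
    CF n (neuralIdeal n (Co ∪ D)) ⊆ minReducedProducts n Co D := by
  classical
  rintro f ⟨hfJ, hfPM, hmin⟩
  obtain ⟨σ, τ, hστ, hfeq0⟩ := hfPM
  have hfeq : f = NeuralAux.PM σ τ := hfeq0
  have hfC : f ∈ neuralIdeal n Co := NeuralAux.neuralIdeal_mono Set.subset_union_left hfJ
  have hfD : f ∈ neuralIdeal n D := NeuralAux.neuralIdeal_mono Set.subset_union_right hfJ
  have hfne : f ≠ 0 := by rw [hfeq]; exact NeuralAux.PM_ne_zero hστ
  have hfdeg : f.totalDegree = σ.card + τ.card := by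
    rw [hfeq, NeuralAux.PM_totalDegree hστ]
  have main : ∀ s₁ t₁ s₂ t₂ : Finset (Fin n),
      NeuralAux.PM s₁ t₁ ∈ neuralIdeal n Co → NeuralAux.PM s₂ t₂ ∈ neuralIdeal n D →
      NeuralAux.PM s₁ t₁ ∣ f → NeuralAux.PM s₂ t₂ ∣ f →
      Disjoint (s₁ ∪ s₂) (t₁ ∪ t₂) ∧ NeuralAux.PM (s₁ ∪ s₂) (t₁ ∪ t₂) = f := by
    intro s₁ t₁ s₂ t₂ hC hD hdvd₁ hdvd₂
    obtain ⟨h₁, hh₁⟩ := hdvd₁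
    obtain ⟨h₂, hh₂⟩ := hdvd₂
    have hsub₁ := NeuralAux.PM_dvd_subsets hστ (hfeq.symm.trans hh₁).symm
    have hsub₂ := NeuralAux.PM_dvd_subsets hστ (hfeq.symm.trans hh₂).symm
    have hsσ : s₁ ∪ s₂ ⊆ σ := Finset.union_subset hsub₁.1 hsub₂.1
    have hsτ : t₁ ∪ t₂ ⊆ τ := Finset.union_subset hsub₁.2 hsub₂.2
    have hdp : Disjoint (s₁ ∪ s₂) (t₁ ∪ t₂) := hστ.mono hsσ hsτ
    have hpC : NeuralAux.PM (s₁ ∪ s₂) (t₁ ∪ t₂) ∈ neuralIdeal n Co := by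
      rw [NeuralAux.PM_split (Finset.subset_union_left) (Finset.subset_union_left)]
      exact Ideal.mul_mem_right _ _ hC
    have hpD : NeuralAux.PM (s₁ ∪ s₂) (t₁ ∪ t₂) ∈ neuralIdeal n D := by
      rw [NeuralAux.PM_split (Finset.subset_union_right) (Finset.subset_union_right)]
      exact Ideal.mul_mem_right _ _ hD
    have hpJ : NeuralAux.PM (s₁ ∪ s₂) (t₁ ∪ t₂) ∈ neuralIdeal n (Co ∪ D) := by
      refine NeuralAux.PM_mem_neuralIdeal _ hdp ?_
      rintro v (hv | hv)
      · exact NeuralAux.eval_eq_zero_of_mem hpC hv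
      · exact NeuralAux.eval_eq_zero_of_mem hpD hv
    have hpdvd : f = NeuralAux.PM (s₁ ∪ s₂) (t₁ ∪ t₂) *
        NeuralAux.PM (σ \ (s₁ ∪ s₂)) (τ \ (t₁ ∪ t₂)) :=
      hfeq.trans (NeuralAux.PM_split hsσ hsτ)
    have hnlt : ¬ (NeuralAux.PM (s₁ ∪ s₂) (t₁ ∪ t₂)).totalDegree < f.totalDegree := fun hlt =>
      hmin ⟨_, ⟨_, _, hdp, rfl⟩, hpJ, hlt, _, hpdvd⟩
    rw [NeuralAux.PM_totalDegree hdp, hfdeg] at hnlt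
    push_neg at hnlt
    have hc1 : (s₁ ∪ s₂).card ≤ σ.card := Finset.card_le_card hsσ
    have hc2 : (t₁ ∪ t₂).card ≤ τ.card := Finset.card_le_card hsτ
    have hσeq : s₁ ∪ s₂ = σ := Finset.eq_of_subset_of_card_le hsσ (by omega)
    have hτeq : t₁ ∪ t₂ = τ := Finset.eq_of_subset_of_card_le hsτ (by omega)
    exact ⟨hdp, by rw [hσeq, hτeq, ← hfeq]⟩
  obtain ⟨f₁, hf₁CF, hf₁dvd⟩ := exists_minimal_pm_dvd ⟨σ, τ, hστ, hfeq0⟩ hfC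
  obtain ⟨f₂, hf₂CF, hf₂dvd⟩ := exists_minimal_pm_dvd ⟨σ, τ, hστ, hfeq0⟩ hfD
  obtain ⟨σ₁, τ₁, hd₁, hf₁eq⟩ := hf₁CF.2.1
  obtain ⟨σ₂, τ₂, hd₂, hf₂eq⟩ := hf₂CF.2.1
  have hf₁eq' : f₁ = NeuralAux.PM σ₁ τ₁ := hf₁eq
  have hf₂eq' : f₂ = NeuralAux.PM σ₂ τ₂ := hf₂eq
  have hkey := main σ₁ τ₁ σ₂ τ₂ (hf₁eq' ▸ hf₁CF.1) (hf₂eq' ▸ hf₂CF.1)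
    (hf₁eq' ▸ hf₁dvd) (hf₂eq' ▸ hf₂dvd)
  refine ⟨⟨f₁, hf₁CF, f₂, hf₂CF, ?_⟩, hfne, ?_⟩
  · have hsr : sqReduce n (f₁ * f₂) = NeuralAux.PM (σ₁ ∪ σ₂) (τ₁ ∪ τ₂) := by
      rw [hf₁eq', hf₂eq']
      exact NeuralAux.sqReduce_PM_mul hkey.1
    exact (hsr.trans hkey.2).symm
  · rintro ⟨q, ⟨g₁, hg₁CF, g₂, hg₂CF, hq⟩, g, hgdeg, hfqg⟩
    obtain ⟨s₁, t₁, he₁, hg₁eq⟩ := hg₁CF.2.1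
    obtain ⟨s₂, t₂, he₂, hg₂eq⟩ := hg₂CF.2.1
    have hg₁eq' : g₁ = NeuralAux.PM s₁ t₁ := hg₁eq
    have hg₂eq' : g₂ = NeuralAux.PM s₂ t₂ := hg₂eq
    have hqne : q ≠ 0 := fun h0 => hfne (by rw [hfqg, h0, zero_mul])
    by_cases hdisj : Disjoint (s₁ ∪ s₂) (t₁ ∪ t₂)
    · have hqeq : q = NeuralAux.PM (s₁ ∪ s₂) (t₁ ∪ t₂) := by
        rw [hq, hg₁eq', hg₂eq']
        exact NeuralAux.sqReduce_PM_mul hdisj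
      have hdvd₁ : NeuralAux.PM s₁ t₁ ∣ f :=
        ⟨NeuralAux.PM ((s₁ ∪ s₂) \ s₁) ((t₁ ∪ t₂) \ t₁) * g, by
          rw [hfqg, hqeq,
            NeuralAux.PM_split (Finset.subset_union_left)
              (Finset.subset_union_left), mul_assoc]⟩
      have hdvd₂ : NeuralAux.PM s₂ t₂ ∣ f :=
        ⟨NeuralAux.PM ((s₁ ∪ s₂) \ s₂) ((t₁ ∪ t₂) \ t₂) * g, by
          rw [hfqg, hqeq,
            NeuralAux.PM_split (Finset.subset_union_right)
              (Finset.subset_union_right), mul_assoc]⟩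
      have hkey2 := main s₁ t₁ s₂ t₂ (hg₁eq' ▸ hg₁CF.1) (hg₂eq' ▸ hg₂CF.1) hdvd₁ hdvd₂
      have hqf : q = f := hqeq.trans hkey2.2
      have hcan : f * 1 = f * g := by
        rw [mul_one]
        conv_lhs => rw [hfqg, hqf]
      have hg1 : (1 : MvPolynomial (Fin n) (ZMod 2)) = g := mul_left_cancel₀ hfne hcan
      rw [← hg1] at hgdeg
      simp [MvPolynomial.totalDegree_one] at hgdeg
    · have h0 : sqReduce n (g₁ * g₂) = 0 := by
        rw [hg₁eq', hg₂eq']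
        exact NeuralAux.sqReduce_PM_mul_zero hdisj
      exact hqne (hq.trans h0)
end
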